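/- arXiv:2202.03461 — 3 statements merged into one kernel-verified Lean document; each statement's English description precedes it below -/
import Mathlib

section
/- For every natural number n, ∑_{j=0}^{n} (-1)^j · C(2n-j, j) · 2^(n-j) = (-1)^⌊n/2⌋, where C denotes the binomial coefficient and ⌊·⌋ is the floor function. -/
private def A (n : ℕ) : ℤ :=
  ∑ j ∈ Finset.range (n + 1), (-1 : ℤ) ^ j * (Nat.choose (2 * n - j) j) * 2 ^ (n - j)

private def B (n : ℕ) : ℤ :=
  ∑ j ∈ Finset.range (n + 1), (-1 : ℤ) ^ j * (Nat.choose (2 * n + 1 - j) j) * 2 ^ (n - j)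

private def T (n : ℕ) : ℤ :=
  ∑ j ∈ Finset.range (n + 1), (-1 : ℤ) ^ j * (Nat.choose (2 * n + 1 - j) (j + 1)) * 2 ^ (n - j)

private def S (n : ℕ) : ℤ :=
  ∑ j ∈ Finset.range (n + 1), (-1 : ℤ) ^ j * (Nat.choose (2 * n - j) (j + 1)) * 2 ^ (n - j)

private lemma hA1 (n : ℕ) : A (n + 1) = 2 ^ (n + 1) - T n := by
  unfold A T
  rw [Finset.sum_range_succ']
  have key : ∀ j ∈ Finset.range (n + 1),
      (-1 : ℤ) ^ (j + 1) * (Nat.choose (2 * (n + 1) - (j + 1)) (j + 1)) * 2 ^ ((n + 1) - (j + 1))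
        = -((-1 : ℤ) ^ j * (Nat.choose (2 * n + 1 - j) (j + 1)) * 2 ^ (n - j)) := by
    intro j hj
    simp only [Finset.mem_range] at hj
    have h1 : 2 * (n + 1) - (j + 1) = 2 * n + 1 - j := by omega
    have h2 : (n + 1) - (j + 1) = n - j := by omega
    rw [h1, h2]; ring
  rw [Finset.sum_congr rfl key, Finset.sum_neg_distrib]
  simp
  ring

private lemma hB1 (n : ℕ) : B (n + 1) = 2 ^ (n + 1) - B n - T n := by
  unfold B T
  rw [Finset.sum_range_succ']
  have key : ∀ j ∈ Finset.range (n + 1),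
      (-1 : ℤ) ^ (j + 1) * (Nat.choose (2 * (n + 1) + 1 - (j + 1)) (j + 1)) * 2 ^ ((n + 1) - (j + 1))
        = -((-1 : ℤ) ^ j * (Nat.choose (2 * n + 1 - j) j) * 2 ^ (n - j))
          - ((-1 : ℤ) ^ j * (Nat.choose (2 * n + 1 - j) (j + 1)) * 2 ^ (n - j)) := by
    intro j hj
    simp only [Finset.mem_range] at hj
    have h1 : 2 * (n + 1) + 1 - (j + 1) = (2 * n + 1 - j) + 1 := by omega
    have h2 : (n + 1) - (j + 1) = n - j := by omega
    rw [h1, h2, Nat.choose_succ_succ]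
    push_cast
    ring
  rw [Finset.sum_congr rfl key, Finset.sum_sub_distrib, Finset.sum_neg_distrib]
  simp
  ring

private lemma hT (n : ℕ) : T n = A n + S n := by
  unfold T A S
  rw [← Finset.sum_add_distrib]
  refine Finset.sum_congr rfl ?_
  intro j hj
  simp only [Finset.mem_range] at hj
  have h1 : 2 * n + 1 - j = (2 * n - j) + 1 := by omega
  rw [h1, Nat.choose_succ_succ]
  push_cast
  ring

private lemma hS (n : ℕ) : S n = 2 ^ (n + 1) - 2 * B n := by
  unfold S B
  rw [Finset.sum_range_succ, Finset.sum_range_succ']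
  have key : ∀ j ∈ Finset.range n,
      (-1 : ℤ) ^ j * (Nat.choose (2 * n - j) (j + 1)) * 2 ^ (n - j)
        = -(2 * ((-1 : ℤ) ^ (j + 1) * (Nat.choose (2 * n + 1 - (j + 1)) (j + 1)) * 2 ^ (n - (j + 1)))) := by
    intro j hj
    simp only [Finset.mem_range] at hj
    have h1 : 2 * n + 1 - (j + 1) = 2 * n - j := by omega
    have h2 : n - j = (n - (j + 1)) + 1 := by omega
    rw [h1, h2, pow_succ]
    ring
  rw [Finset.sum_congr rfl key, Finset.sum_neg_distrib, ← Finset.mul_sum]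
  have hz : 2 * n - n = n := by omega
  rw [hz, Nat.choose_succ_self]
  simp
  ring

private lemma recA (n : ℕ) : A (n + 1) = 2 * B n - A n := by
  have := hA1 n
  rw [hT, hS] at this
  linarith

private lemma recB (n : ℕ) : B (n + 1) = A (n + 1) - B n := by
  rw [hA1, hB1]; ring

private lemma main (n : ℕ) :
    A n = (-1 : ℤ) ^ (n / 2) ∧ B n = (if n % 2 = 0 then (-1 : ℤ) ^ (n / 2) else 0) := by
  induction n with
  | zero => constructor <;> simp [A, B]
  | succ n ih =>
    obtain ⟨hA, hB⟩ := ih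
    have hA' : A (n + 1) = (-1 : ℤ) ^ ((n + 1) / 2) := by
      rw [recA, hA, hB]
      rcases Nat.mod_two_eq_zero_or_one n with h2 | h2
      · have h3 : (n + 1) / 2 = n / 2 := by omega
        rw [h3]; simp [h2]; ring
      · have h3 : (n + 1) / 2 = n / 2 + 1 := by omega
        rw [h3]; simp [h2]; ring
    refine ⟨hA', ?_⟩
    rw [recB, hA', hB]
    rcases Nat.mod_two_eq_zero_or_one n with h2 | h2
    · have h3 : (n + 1) % 2 = 1 := by omega
      have h4 : (n + 1) / 2 = n / 2 := by omega
      rw [h4]; simp [h2, h3]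
    · have h3 : (n + 1) % 2 = 0 := by omega
      rw [h3]; simp [h2, h3]

/-- The alternating binomial sum `∑_{j=0}^n (-1)^j C(2n-j, j) 2^(n-j)` equals
`(-1)^⌊n/2⌋`. -/
theorem sum_eq_neg_one_pow_floor (n : ℕ) :
    ∑ j ∈ Finset.range (n + 1), (-1 : ℤ) ^ j * (Nat.choose (2 * n - j) j) * 2 ^ (n - j) =
      (-1 : ℤ) ^ (n / 2) := by
  exact (main n).1
end

section
/- Let ω ∈ ℤ₂ be the root of x² - x + 2 = 0 with v₂(ω) = 1, and set ω̄ = 1 - ω. Then: (a) there exists Ω ∈ ℤ₂ with Ω ≡ 3 (mod 4) such that v₂(ω̄^(2k-1) + (1-2ω)) = 3 + v₂(k - Ω) for every integer k ≥ 1; and (b) there exists Ω₈ ∈ ℤ₂ with Ω₈ ≡ 2 (mod 4) such that v₂(ω̄^(2k-1) + 9·(1-2ω)) = 3 + v₂(k - Ω₈) for every integer k ≥ 1. Here k is regarded as an element of ℤ₂, and congruence mod 4 means the difference lies in 4ℤ₂. -/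
/-!
Write `k = j + 1` and `F j = ω̄ ^ (2 j + 1) + d (1 - 2 ω)`. Since `q = ω̄ ^ 2` satisfies
`q - 1 = -(ω + 2) ≡ 8 (mod 16)`, lifting the exponent gives `v₂(F i - F j) = 3 + v₂(i - j)`, so
`F` is `8` times a 2-adic isometry. Approximate zeros can then be corrected bit by bit: if
`2 ^ (3 + n)` divides `F j` exactly, then `2 ^ (3 + n + 1)` divides `F (j + 2 ^ n)`. The
corrections converge to a 2-adic `W` with `v₂(F j) = 3 + v₂(j - W)` for all `j`. This needs
`F j ≠ 0`, which holds because the norms `2 ^ (2 j + 1)` and `7 d ^ 2` of the two summands in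
`ℤ[ω]` differ. Finally `W mod 4` is read off from `ω ≡ 6 (mod 32)`.
-/

namespace PadicInt

variable {p : ℕ} [Fact p.Prime]

theorem isUnit_iff_not_dvd (x : ℤ_[p]) : IsUnit x ↔ ¬ (p : ℤ_[p]) ∣ x := by
  rw [← Ideal.mem_span_singleton, ← maximalIdeal_eq_span_p, IsLocalRing.mem_maximalIdeal,
    mem_nonunits_iff, not_not]

theorem pow_dvd_iff_toZModPow_eq_zero (n : ℕ) (x : ℤ_[p]) :
    (p : ℤ_[p]) ^ n ∣ x ↔ toZModPow n x = 0 := by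
  rw [← RingHom.mem_ker, ker_toZModPow, Ideal.mem_span_singleton]

theorem valuation_eq_add_of_forall_pow_dvd_iff {x y : ℤ_[p]} {c : ℕ} (hx : x ≠ 0)
    (h : ∀ n, (p : ℤ_[p]) ^ (c + n) ∣ x ↔ (p : ℤ_[p]) ^ n ∣ y) :
    x.valuation = c + y.valuation := by
  have hdvd {z : ℤ_[p]} (hz : z ≠ 0) (n : ℕ) : (p : ℤ_[p]) ^ n ∣ z ↔ n ≤ z.valuation := by
    rw [← Ideal.mem_span_singleton, mem_span_pow_iff_le_valuation z hz]
  have hy : y ≠ 0 := by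
    rintro rfl
    have := (hdvd hx _).1 ((h (x.valuation + 1)).2 (dvd_zero _))
    omega
  have h₁ := (hdvd hx _).1 ((h y.valuation).2 ((hdvd hy _).2 le_rfl))
  have h₂ := mt (hdvd hx _).2 (mt (h (y.valuation + 1)).1 (mt (hdvd hy _).1 (by omega)))
  omega

theorem exists_pow_dvd_sub_of_pow_dvd_sub (f : ℕ → ℤ)
    (hf : ∀ i, (p : ℤ) ^ i ∣ f (i + 1) - f i) :
    ∃ x : ℤ_[p], ∀ n, (p : ℤ_[p]) ^ n ∣ (f n : ℤ_[p]) - x := by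
  refine ⟨ofIntSeq _ (isCauSeq_padicNorm_of_pow_dvd_sub f p hf), fun n => ?_⟩
  rw [pow_dvd_iff_toZModPow_eq_zero, map_sub, toZModPow_ofIntSeq_of_pow_dvd_sub f p hf,
    map_intCast, sub_self]

theorem two_dvd_iff_toZMod_eq_zero (x : ℤ_[2]) : 2 ∣ x ↔ toZMod x = 0 := by
  rw [← RingHom.mem_ker, ker_toZMod, maximalIdeal_eq_span_p, Ideal.mem_span_singleton,
    Nat.cast_ofNat]

theorem isUnit_iff_toZMod_eq_one (x : ℤ_[2]) : IsUnit x ↔ toZMod x = 1 := by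
  rw [isUnit_iff_not_dvd, Nat.cast_ofNat, two_dvd_iff_toZMod_eq_zero]
  generalize toZMod x = a
  revert a
  decide

theorem not_isUnit_two : ¬ IsUnit (2 : ℤ_[2]) := by
  rw [isUnit_iff_not_dvd, Nat.cast_ofNat, not_not]

theorem isUnit_one_add_two_mul (x : ℤ_[2]) : IsUnit (1 + 2 * x) := by
  simp [isUnit_iff_toZMod_eq_one, (two_dvd_iff_toZMod_eq_zero 2).1 dvd_rfl]

theorem pow_succ_dvd_add {a : ℕ} {x y : ℤ_[2]} (hx : 2 ^ a ∣ x) (hx' : ¬ 2 ^ (a + 1) ∣ x)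
    (hy : 2 ^ a ∣ y) (hy' : ¬ 2 ^ (a + 1) ∣ y) : 2 ^ (a + 1) ∣ x + y := by
  obtain ⟨x, rfl⟩ := hx
  obtain ⟨y, rfl⟩ := hy
  rw [pow_succ, mul_dvd_mul_iff_left (pow_ne_zero a two_ne_zero)] at hx' hy'
  rw [two_dvd_iff_toZMod_eq_zero] at hx' hy'
  rw [pow_succ, ← mul_add, mul_dvd_mul_iff_left (pow_ne_zero a two_ne_zero),
    two_dvd_iff_toZMod_eq_zero, map_add]
  generalize toZMod x = a at hx' ⊢
  generalize toZMod y = b at hy' ⊢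
  revert a b
  decide

theorem isUnit_geom_sum {q : ℤ_[2]} (hq : 2 ∣ q - 1) {c : ℕ} (hc : Odd c) :
    IsUnit (∑ i ∈ Finset.range c, q ^ i) := by
  rw [two_dvd_iff_toZMod_eq_zero, map_sub, map_one, sub_eq_zero] at hq
  simp [isUnit_iff_toZMod_eq_one, hq, ZMod.natCast_eq_one_iff_odd, hc]

theorem not_two_dvd_natCast {m : ℕ} (hm : Odd m) : ¬ 2 ∣ (m : ℤ_[2]) := by
  rw [two_dvd_iff_toZMod_eq_zero, map_natCast, ZMod.natCast_eq_one_iff_odd.2 hm]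
  exact one_ne_zero

/-- Lifting the exponent at `2`. -/
theorem pow_add_dvd_pow_sub_one_iff {k : ℕ} (hk : 2 ≤ k) {q t : ℤ_[2]} (ht : IsUnit t)
    (hq : q - 1 = 2 ^ k * t) (m n : ℕ) :
    2 ^ (k + n) ∣ q ^ m - 1 ↔ 2 ^ n ∣ (m : ℤ_[2]) := by
  induction n generalizing k q t m with
  | zero => simpa using (Dvd.intro t hq.symm).trans (sub_one_dvd_pow_sub_one q m)
  | succ n ih =>
    obtain ⟨m, rfl | rfl⟩ := Nat.even_or_odd' m
    · obtain ⟨k, rfl⟩ := Nat.exists_eq_add_of_le' hk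
      have hsq : q ^ 2 - 1 = 2 ^ (k + 2 + 1) * (t * (1 + 2 ^ (k + 1) * t)) := by
        rw [show q = 1 + 2 ^ (k + 2) * t by rw [← hq]; ring]; ring
      have hunit : IsUnit (t * (1 + 2 ^ (k + 1) * t)) :=
        ht.mul (by simpa [pow_succ', mul_assoc] using isUnit_one_add_two_mul (2 ^ k * t))
      rw [pow_mul, ← add_assoc, add_right_comm, ih (by omega) hunit hsq, Nat.cast_mul,
        Nat.cast_ofNat, pow_succ', mul_dvd_mul_iff_left two_ne_zero]
    · have hodd : q ^ (2 * m + 1) - 1 = 2 ^ k * (t * ∑ i ∈ Finset.range (2 * m + 1), q ^ i) := by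
        rw [← mul_geom_sum, hq, mul_assoc]
      have hunit := ht.mul (isUnit_geom_sum (hq ▸ dvd_mul_of_dvd_left
        (dvd_pow_self 2 (by omega)) t) (odd_two_mul_add_one m))
      refine iff_of_false (fun h => ?_) (fun h => ?_)
      · have := (pow_dvd_pow 2 (by omega : k + 1 ≤ k + (n + 1))).trans (hodd ▸ h)
        rw [hunit.dvd_mul_right, pow_dvd_pow_iff two_ne_zero not_isUnit_two] at this
        omega
      · exact not_two_dvd_natCast (odd_two_mul_add_one m)
          ((dvd_pow_self 2 n.succ_ne_zero).trans h)

theorem exists_forall_pow_dvd_iff (F : ℕ → ℤ_[2]) {c j₀ : ℕ}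
    (hF : ∀ i j n : ℕ, 2 ^ (c + n) ∣ F i - F j ↔ 2 ^ n ∣ (i : ℤ_[2]) - j) (h₀ : 2 ^ c ∣ F j₀) :
    ∃ W : ℤ_[2], ∀ j n : ℕ, 2 ^ (c + n) ∣ F j ↔ 2 ^ n ∣ (j : ℤ_[2]) - W := by
  have hroots : ∀ n, ∃ j, 2 ^ (c + n) ∣ F j := by
    intro n
    induction n with
    | zero => exact ⟨j₀, h₀⟩
    | succ n ih =>
      obtain ⟨j, hj⟩ := ih
      rw [← add_assoc]
      by_cases hj' : 2 ^ (c + n + 1) ∣ F j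
      · exact ⟨j, hj'⟩
      -- `F (j + 2 ^ n) - F j` is `2 ^ (c + n)` times a unit, so the two odd parts cancel mod 2
      have hstep := hF (j + 2 ^ n) j
      simp only [Nat.cast_add, Nat.cast_pow, Nat.cast_ofNat, add_sub_cancel_left] at hstep
      have hd := (hstep n).2 dvd_rfl
      have hd' : ¬ 2 ^ (c + n + 1) ∣ F (j + 2 ^ n) - F j := by
        rw [add_assoc, (hstep (n + 1)).not, pow_dvd_pow_iff two_ne_zero not_isUnit_two]
        omega
      exact ⟨j + 2 ^ n, by simpa using pow_succ_dvd_add hd hd' hj hj'⟩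
  choose J hJ using hroots
  have hJ_sub (n m : ℕ) (h : n ≤ m) : 2 ^ n ∣ (J m : ℤ_[2]) - J n :=
    (hF _ _ n).1 (dvd_sub ((pow_dvd_pow 2 (by omega)).trans (hJ m)) (hJ n))
  obtain ⟨W, hW⟩ := exists_pow_dvd_sub_of_pow_dvd_sub (p := 2) (fun n => J n) fun n => by
    exact_mod_cast (pow_p_dvd_int_iff n _).1 (by exact_mod_cast hJ_sub n (n + 1) n.le_succ)
  refine ⟨W, fun j n => ?_⟩
  calc 2 ^ (c + n) ∣ F j ↔ 2 ^ (c + n) ∣ F j - F (J n) := (dvd_sub_left (hJ n)).symm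
    _ ↔ 2 ^ n ∣ (j : ℤ_[2]) - J n := hF _ _ n
    _ ↔ 2 ^ n ∣ (j : ℤ_[2]) - W := by
      rw [← sub_add_sub_cancel (j : ℤ_[2]) (J n) W, dvd_add_left]
      simpa using hW n

end PadicInt

open PadicInt

section

variable {ω : ℤ_[2]}

theorem exists_int_one_sub_pow_eq (hroot : ω ^ 2 - ω + 2 = 0) (n : ℕ) :
    ∃ A B : ℤ, (1 - ω) ^ n = A + B * ω ∧ ω ^ n = A + B * (1 - ω) := by
  induction n with
  | zero => exact ⟨1, 0, by simp, by simp⟩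
  | succ n ih =>
    obtain ⟨A, B, h₁, h₂⟩ := ih
    refine ⟨A + 2 * B, -A, ?_, ?_⟩ <;> push_cast <;> rw [pow_succ]
    · linear_combination (1 - ω) * h₁ - B * hroot
    · linear_combination ω * h₂ - B * hroot

theorem eq_zero_of_intCast_add_mul_eq_zero (hroot : ω ^ 2 - ω + 2 = 0) {a b : ℤ}
    (h : a + b * ω = 0) : a = 0 ∧ b = 0 := by
  have hnorm : ((a ^ 2 + a * b + 2 * b ^ 2 : ℤ) : ℤ_[2]) = 0 := by
    push_cast
    linear_combination (a + b * (1 - ω)) * h + b ^ 2 * hroot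
  have hnorm' : a ^ 2 + a * b + 2 * b ^ 2 = 0 := by exact_mod_cast hnorm
  have hb : b ^ 2 = 0 := by nlinarith [sq_nonneg (2 * a + b), sq_nonneg b]
  have ha : a ^ 2 = 0 := by nlinarith
  exact ⟨pow_eq_zero_iff two_ne_zero |>.1 ha, pow_eq_zero_iff two_ne_zero |>.1 hb⟩

theorem one_sub_pow_add_mul_ne_zero (hroot : ω ^ 2 - ω + 2 = 0) (d : ℤ) (n : ℕ) :
    (1 - ω) ^ n + d * (1 - 2 * ω) ≠ 0 := by
  intro h
  obtain ⟨A, B, h₁, h₂⟩ := exists_int_one_sub_pow_eq hroot n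
  obtain ⟨hA, hB⟩ := eq_zero_of_intCast_add_mul_eq_zero hroot (a := A + d) (b := B - 2 * d)
    (by push_cast; linear_combination h - h₁)
  rw [show A = -d by omega, show B = 2 * d by omega] at h₁ h₂
  -- compare the norms `2 ^ n` and `7 * d ^ 2` of the two summands
  have hnorm : ((2 ^ n : ℤ) : ℤ_[2]) = ((7 * d ^ 2 : ℤ) : ℤ_[2]) := by
    calc ((2 ^ n : ℤ) : ℤ_[2]) = (ω * (1 - ω)) ^ n := by
          push_cast
          rw [show ω * (1 - ω) = 2 by linear_combination -hroot]
      _ = _ := by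
          rw [mul_pow, h₁, h₂]
          push_cast
          linear_combination (-4 * (d : ℤ_[2]) ^ 2) * hroot
  have h7 : (7 : ℤ) ∣ 2 ^ n := ⟨d ^ 2, Int.cast_injective hnorm⟩
  have := (Int.prime_iff_natAbs_prime.2 (by norm_num)).dvd_of_dvd_pow h7
  norm_num at this

theorem two_pow_five_dvd_sub_six (hroot : ω ^ 2 - ω + 2 = 0) (hval : ω.valuation = 1) :
    2 ^ 5 ∣ ω - 6 := by
  have hω0 : ω ≠ 0 := by rintro rfl; simp at hval
  obtain ⟨ε, rfl⟩ : 2 ∣ ω := by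
    simpa [← Ideal.mem_span_singleton] using (mem_span_pow_iff_le_valuation ω hω0 1).2 hval.ge
  have hmod := congrArg (toZModPow 5) hroot
  have := pow_dvd_iff_toZModPow_eq_zero (p := 2) 5 (2 * ε - 6)
  simp only [map_add, map_sub, map_mul, map_pow, map_ofNat, map_zero, Nat.cast_ofNat]
    at hmod this ⊢
  rw [this]
  generalize toZModPow 5 ε = e at hmod ⊢
  revert e
  decide

theorem pow_add_dvd_sub_iff (hroot : ω ^ 2 - ω + 2 = 0) (h16 : 2 ^ 4 ∣ ω - 6) (d : ℤ_[2])
    (i j n : ℕ) :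
    2 ^ (3 + n) ∣ ((1 - ω) ^ (2 * i + 1) + d * (1 - 2 * ω)) -
        ((1 - ω) ^ (2 * j + 1) + d * (1 - 2 * ω)) ↔ 2 ^ n ∣ (i : ℤ_[2]) - j := by
  wlog hji : j ≤ i generalizing i j
  · rw [← dvd_neg, neg_sub, this j i (by omega), ← dvd_neg, neg_sub]
  obtain ⟨m, rfl⟩ := Nat.exists_eq_add_of_le hji
  obtain ⟨u, hu⟩ := h16
  have hunit : IsUnit (1 - ω) := by
    simpa [show 1 - ω = 1 + 2 * (-3 - 8 * u) by linear_combination -hu] using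
      isUnit_one_add_two_mul (-3 - 8 * u)
  have hq : (1 - ω) ^ 2 - 1 = 2 ^ 3 * -(1 + 2 * u) := by linear_combination hroot - hu
  have hdiff : (1 - ω) ^ (2 * (j + m) + 1) + d * (1 - 2 * ω) -
      ((1 - ω) ^ (2 * j + 1) + d * (1 - 2 * ω)) =
        (1 - ω) ^ (2 * j + 1) * (((1 - ω) ^ 2) ^ m - 1) := by
    rw [← pow_mul, mul_add, pow_succ, pow_add, pow_succ]
    ring
  rw [hdiff, (hunit.pow _).dvd_mul_left,
    pow_add_dvd_pow_sub_one_iff (by norm_num) (isUnit_one_add_two_mul u).neg hq]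
  push_cast
  rw [add_sub_cancel_left]

theorem exists_valuation_one_sub_pow_add_mul_eq (hroot : ω ^ 2 - ω + 2 = 0)
    (h16 : 2 ^ 4 ∣ ω - 6) (d : ℤ) {k₀ : ℕ} (hk₀ : 1 ≤ k₀)
    (h₀ : 2 ^ 5 ∣ (1 - ω) ^ (2 * k₀ - 1) + d * (1 - 2 * ω)) :
    ∃ Ω : ℤ_[2], 4 ∣ Ω - k₀ ∧ ∀ k : ℕ, 1 ≤ k →
      ((1 - ω) ^ (2 * k - 1) + d * (1 - 2 * ω)).valuation = 3 + ((k : ℤ_[2]) - Ω).valuation := by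
  obtain ⟨k₀, rfl⟩ := Nat.exists_eq_add_of_le' hk₀
  rw [show 2 * (k₀ + 1) - 1 = 2 * k₀ + 1 by omega] at h₀
  obtain ⟨W, hW⟩ :=
    exists_forall_pow_dvd_iff (fun j => (1 - ω) ^ (2 * j + 1) + d * (1 - 2 * ω))
      (pow_add_dvd_sub_iff hroot h16 d) ((pow_dvd_pow 2 (by norm_num)).trans h₀)
  refine ⟨W + 1, ?_, fun k hk => ?_⟩
  · rw [← dvd_neg, show -(W + 1 - ((k₀ + 1 : ℕ) : ℤ_[2])) = k₀ - W by push_cast; ring]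
    exact (by norm_num : (4 : ℤ_[2]) = 2 ^ 2) ▸ (hW k₀ 2).1 h₀
  · obtain ⟨j, rfl⟩ := Nat.exists_eq_add_of_le' hk
    rw [show 2 * (j + 1) - 1 = 2 * j + 1 by omega,
      show ((j + 1 : ℕ) : ℤ_[2]) - (W + 1) = j - W by push_cast; ring]
    exact valuation_eq_add_of_forall_pow_dvd_iff (one_sub_pow_add_mul_ne_zero hroot d _) (hW j)

end

/-- Let `ω ∈ ℤ₂` be the root of `x² - x + 2` with `v₂(ω) = 1` and `ω̄ = 1 - ω`.
Then (a) there is `Ω ∈ ℤ₂` with `Ω ≡ 3 (mod 4ℤ₂)` such that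
`v₂(ω̄^(2k-1) + (1-2ω)) = 3 + v₂(k - Ω)` for all `k ≥ 1`, and
(b) there is `Ω₈ ∈ ℤ₂` with `Ω₈ ≡ 2 (mod 4ℤ₂)` such that
`v₂(ω̄^(2k-1) + 9(1-2ω)) = 3 + v₂(k - Ω₈)` for all `k ≥ 1`. -/
theorem exists_Omega_and_Omega8 (ω : ℤ_[2]) (hroot : ω ^ 2 - ω + 2 = 0)
    (hval : ω.valuation = 1) :
    (∃ Ω : ℤ_[2], (4 : ℤ_[2]) ∣ (Ω - 3) ∧ ∀ k : ℕ, 1 ≤ k →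
        ((1 - ω) ^ (2 * k - 1) + (1 - 2 * ω)).valuation = 3 + ((k : ℤ_[2]) - Ω).valuation) ∧
    (∃ Ω₈ : ℤ_[2], (4 : ℤ_[2]) ∣ (Ω₈ - 2) ∧ ∀ k : ℕ, 1 ≤ k →
        ((1 - ω) ^ (2 * k - 1) + 9 * (1 - 2 * ω)).valuation =
          3 + ((k : ℤ_[2]) - Ω₈).valuation) := by
  have h32 := two_pow_five_dvd_sub_six hroot hval
  have h16 : 2 ^ 4 ∣ ω - 6 := (pow_dvd_pow 2 (by norm_num)).trans h32
  have hmod (x : ℤ_[2]) : 2 ^ 5 ∣ x ↔ toZModPow 5 x = 0 := by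
    simpa using pow_dvd_iff_toZModPow_eq_zero (p := 2) 5 x
  have hω : toZModPow 5 ω = 6 := by
    simpa [sub_eq_zero, map_ofNat] using (hmod _).1 h32
  constructor
  · simpa using exists_valuation_one_sub_pow_add_mul_eq hroot h16 1 (k₀ := 3) (by norm_num)
      ((hmod _).2 (by simp [hω, map_ofNat]; decide))
  · simpa using exists_valuation_one_sub_pow_add_mul_eq hroot h16 9 (k₀ := 2) (by norm_num)
      ((hmod _).2 (by simp [hω, map_ofNat]; decide))
end

section
/- There are no two distinct positive integers n and m such that a(n) - 2^n = a(m) - 2^m. -/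
/-- The sequence `a` defined by `a 0 = 1`, `a 1 = -1`,
`a n = -3 * a (n-1) - 4 * a (n-2)` for `n ≥ 2`. -/
def a : ℕ → ℤ
  | 0 => 1
  | 1 => -1
  | n + 2 => -3 * a (n + 1) - 4 * a n

/-!
The characteristic polynomial `X² + 3X + 4` has discriminant `-7` and roots of norm `4`, which
gives two independent bounds on a coincidence `a n - 2 ^ n = a m - 2 ^ m = b` with `0 < n < m`.

Archimedean: `(2 a (n + 1) + 3 a n)² + 7 (a n)² = 2 ^ (2n + 3)`, so `|b| = O(2 ^ n)`, and `b` is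
odd, hence nonzero. Inserting `a m = 2 ^ m + b` into the same identity for `m` factors
`56 b²` into two integers of sum `2 (2 ^ m - 7 b)`, so `2 ^ m = O(b²)` and `m ≤ 2n + 8`.

2-adic: modulo `2 ^ n` the polynomial has a root `x ≡ 9 (mod 16)` whose conjugate `-3 - x` is
divisible by `4`, so by the Binet formula `a k` behaves like a multiple of `x ^ k` modulo `2 ^ n`.
Then `a m ≡ a n` forces `2 ^ n ∣ x ^ (m - n) - 1`, and lifting the exponent gives
`2 ^ n ≤ 8 (m - n)`.

The two bounds are incompatible once `n ≥ 7`; the remaining cases are checked by computation.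
-/

lemma a_add_two (n : ℕ) : a (n + 2) = -3 * a (n + 1) - 4 * a n := rfl

lemma odd_a : ∀ n, Odd (a n)
  | 0 => odd_one
  | 1 => ⟨-1, rfl⟩
  | n + 2 => by
    rw [a_add_two]
    exact (Int.odd_mul.2 ⟨by decide, odd_a (n + 1)⟩).sub_even ⟨2 * a n, by ring⟩

lemma sq_add_seven_mul_sq_a : ∀ n, (2 * a (n + 1) + 3 * a n) ^ 2 + 7 * a n ^ 2 = 2 ^ (2 * n + 3)
  | 0 => rfl
  | n + 1 => by
    rw [a_add_two]
    linear_combination 4 * sq_add_seven_mul_sq_a n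

lemma Int.add_le_mul_add_one {s t : ℤ} (h : 0 < s * t) : s + t ≤ s * t + 1 := by
  rcases pos_and_pos_or_neg_and_neg_of_mul_pos h with ⟨hs, ht⟩ | ⟨hs, ht⟩
  · nlinarith
  · linarith

lemma two_mul_le_of_sq_add_seven_mul_sq {X P b : ℤ} (h : X ^ 2 + 7 * (P + b) ^ 2 = 8 * P ^ 2)
    (hb : b ≠ 0) : 2 * P ≤ 71 * b ^ 2 := by
  have hfac : (P - 7 * b - X) * (P - 7 * b + X) = 56 * b ^ 2 := by linear_combination -h
  have hsum := Int.add_le_mul_add_one (s := P - 7 * b - X) (t := P - 7 * b + X)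
    (by rw [hfac]; positivity)
  rw [hfac] at hsum
  have : 0 < b ^ 2 := by positivity
  linarith [Int.le_self_sq b]

lemma le_two_mul_add_eight_of_sub_two_pow_eq {n m : ℕ} (hn : 0 < n)
    (h : a n - 2 ^ n = a m - 2 ^ m) : m ≤ 2 * n + 8 := by
  have hb : a n - 2 ^ n ≠ 0 := fun h0 ↦ by
    simpa [h0] using (odd_a n).sub_even ((even_two (α := ℤ)).pow_of_ne_zero hn.ne')
  have hm : 2 * 2 ^ m ≤ 71 * (a n - 2 ^ n) ^ 2 :=
    two_mul_le_of_sq_add_seven_mul_sq (X := 2 * a (m + 1) + 3 * a m)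
      (by linear_combination sq_add_seven_mul_sq_a m + 7 * (2 ^ m + (a n - 2 ^ n) + a m) * h) hb
  have han : 7 * a n ^ 2 ≤ 8 * (2 ^ n) ^ 2 := by
    nlinarith [sq_add_seven_mul_sq_a n, sq_nonneg (2 * a (n + 1) + 3 * a n),
      show (2 : ℤ) ^ (2 * n + 3) = 8 * (2 ^ n) ^ 2 by ring]
  have hbn : (a n - 2 ^ n) ^ 2 ≤ 9 * (2 ^ n) ^ 2 := by
    nlinarith [sq_nonneg (a n + 2 * 2 ^ n), pow_pos (two_pos (α := ℤ)) n]
  have hpow : (2 : ℤ) ^ (m + 1) < 2 ^ (2 * n + 10) := by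
    rw [pow_succ, show 2 * n + 10 = n * 2 + 10 by ring, pow_add, pow_mul]
    nlinarith [pow_pos (two_pos (α := ℤ)) n]
  have := (pow_lt_pow_iff_right₀ one_lt_two).1 hpow
  omega

/-- With `f x = x ^ 2 + 3 * x + 4`, the step is `x ↦ x + f x = (x + 2) ^ 2`, and
`f ((x + 2) ^ 2) = f x * (x ^ 2 + 5 * x + 8)` with an even second factor: each step gains a
factor `2` in `f`. -/
def rootApprox : ℕ → ℤ
  | 0 => 9
  | k + 1 => (rootApprox k + 2) ^ 2

lemma rootApprox_modEq (k : ℕ) : rootApprox k ≡ 9 [ZMOD 16] := by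
  induction k with
  | zero => rfl
  | succ k ih => exact ((ih.add_right 2).pow 2).trans (by decide)

lemma two_pow_dvd_rootApprox (k : ℕ) :
    2 ^ (k + 4) ∣ rootApprox k ^ 2 + 3 * rootApprox k + 4 := by
  induction k with
  | zero => exact ⟨7, rfl⟩
  | succ k ih =>
    set x := rootApprox k
    have hstep : rootApprox (k + 1) ^ 2 + 3 * rootApprox (k + 1) + 4
        = (x ^ 2 + 3 * x + 4) * (x ^ 2 + 5 * x + 8) := by
      rw [rootApprox]; ring
    have heven : Even (x ^ 2 + 5 * x + 8) := by
      simp +decide [Int.even_add, Int.even_pow, Int.even_mul, parity_simps]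
    rw [hstep, pow_succ]
    exact mul_dvd_mul ih (even_iff_two_dvd.1 heven)

lemma binet_a {R : Type*} [CommRing R] {x : R} (hx : x ^ 2 + 3 * x + 4 = 0) :
    ∀ k, (2 * x + 3) * a k = x ^ k * (x + 2) - (-3 - x) ^ k * (-1 - x)
  | 0 => by simp [a]; ring
  | 1 => by simp [a]; ring
  | k + 2 => by
    rw [a_add_two]
    push_cast
    linear_combination (-3) * binet_a hx (k + 1) - 4 * binet_a hx k
      - ((x + 2) * x ^ k - (-1 - x) * (-3 - x) ^ k) * hx

lemma pow_mul_pow_sub_one_eq_zero {R : Type*} [CommRing R] {x : R} (hx : x ^ 2 + 3 * x + 4 = 0)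
    {n d : ℕ} (h2 : (2 : R) ^ n = 0) (hy : (-3 - x) ^ n = 0)
    (h : (a n : R) - 2 ^ n = a (n + d) - 2 ^ (n + d)) :
    x ^ n * (x + 2) * (x ^ d - 1) = 0 := by
  linear_combination -binet_a hx (n + d) + binet_a hx n - (2 * x + 3) * h
    + (2 * x + 3) * (2 ^ d - 1) * h2 + ((-3 - x) ^ d - 1) * (-1 - x) * hy

lemma emultiplicity_two_pow_mul_odd {k : ℕ} {u : ℤ} (hu : Odd u) :
    emultiplicity 2 (2 ^ k * u) = k := by
  rw [emultiplicity_mul Int.prime_two, emultiplicity_pow_self_of_prime Int.prime_two,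
    emultiplicity_eq_zero.2 (by rwa [← even_iff_two_dvd, Int.not_even_iff_odd]), add_zero]

lemma two_pow_le_of_dvd_pow_sub_one {x : ℤ} (hx : x ≡ 9 [ZMOD 16]) {n d : ℕ} (hd : d ≠ 0)
    (h : 2 ^ n ∣ x ^ d - 1) : 2 ^ n ≤ 8 * d := by
  obtain ⟨j, d', hd', rfl⟩ := Nat.exists_eq_two_pow_mul_odd hd
  have hx1 : x - 1 = 2 ^ 3 * (2 * (x / 16) + 1) := by
    unfold Int.ModEq at hx; omega
  have h4 : (4 : ℤ) ∣ x - 1 := ⟨2 * (2 * (x / 16) + 1), by omega⟩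
  have hlte := Int.two_pow_sub_pow' (2 ^ j * d') h4 (by unfold Int.ModEq at hx; omega)
  push_cast at hlte
  rw [one_pow, hx1, emultiplicity_two_pow_mul_odd (by exact ⟨x / 16, by ring⟩),
    emultiplicity_two_pow_mul_odd (by exact_mod_cast hd')] at hlte
  have : n ≤ 3 + j := by exact_mod_cast (pow_dvd_iff_le_emultiplicity.1 h).trans_eq hlte
  calc 2 ^ n ≤ 2 ^ (3 + j) := Nat.pow_le_pow_right two_pos this
    _ = 8 * 2 ^ j := by ring
    _ ≤ 8 * (2 ^ j * d') := by gcongr; exact Nat.le_mul_of_pos_right _ hd'.pos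

lemma two_pow_le_of_sub_two_pow_eq {n d : ℕ} (hd : d ≠ 0)
    (h : a n - 2 ^ n = a (n + d) - 2 ^ (n + d)) : 2 ^ n ≤ 8 * d := by
  set x := rootApprox n
  have hx16 : x ≡ 9 [ZMOD 16] := rootApprox_modEq n
  have hroot : 2 ^ n ∣ x ^ 2 + 3 * x + 4 :=
    (pow_dvd_pow 2 (Nat.le_add_right n 4)).trans (two_pow_dvd_rootApprox n)
  have hy : 2 ^ n ∣ (-3 - x) ^ n :=
    pow_dvd_pow_of_dvd ⟨-(x + 3) / 2, by unfold Int.ModEq at hx16; omega⟩ n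
  have hdvd : 2 ^ n ∣ x ^ n * (x + 2) * (x ^ d - 1) := by
    have cast_eq_zero {z : ℤ} : 2 ^ n ∣ z ↔ (z : ZMod (2 ^ n)) = 0 := by
      rw [ZMod.intCast_zmod_eq_zero_iff_dvd]; push_cast; rfl
    rw [cast_eq_zero] at hroot hy ⊢
    push_cast at hroot hy ⊢
    refine pow_mul_pow_sub_one_eq_zero hroot ?_ hy (by exact_mod_cast congrArg Int.cast h)
    exact_mod_cast ZMod.natCast_self (2 ^ n)
  have hx : Odd x := ⟨x / 2, by unfold Int.ModEq at hx16; omega⟩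
  have hodd : Odd (x ^ n * (x + 2)) := hx.pow.mul (hx.add_even even_two)
  have hcop : IsCoprime (2 ^ n) (x ^ n * (x + 2)) :=
    (Int.prime_two.coprime_iff_not_dvd.2
      (by rwa [← even_iff_two_dvd, Int.not_even_iff_odd])).pow_left
  exact two_pow_le_of_dvd_pow_sub_one hx16 hd (hcop.dvd_of_dvd_mul_left hdvd)

lemma sub_two_pow_ne_of_lt {n m : ℕ} (hn : 0 < n) (hnm : n < m) :
    a n - 2 ^ n ≠ a m - 2 ^ m := by
  intro h
  have hm := le_two_mul_add_eight_of_sub_two_pow_eq hn h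
  obtain ⟨d, rfl⟩ := Nat.exists_eq_add_of_lt hnm
  have hd := two_pow_le_of_sub_two_pow_eq d.succ_ne_zero h
  have hn6 : n ≤ 6 := by
    by_contra! h7
    obtain ⟨k, rfl⟩ := Nat.exists_eq_add_of_le h7
    have := Nat.lt_two_pow_self (n := k)
    rw [pow_add] at hd
    omega
  have hd13 : d ≤ 13 := by omega
  interval_cases n <;> interval_cases d <;> revert h <;> decide

/-- There are no two distinct positive integers `n`, `m` with
`a n - 2^n = a m - 2^m`. -/
theorem no_repeats_a_sub_two_pow (n m : ℕ) (hn : 0 < n) (hm : 0 < m) (hnm : n ≠ m) :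
    a n - 2 ^ n ≠ a m - 2 ^ m := by
  rcases hnm.lt_or_gt with h | h
  · exact sub_two_pow_ne_of_lt hn h
  · exact (sub_two_pow_ne_of_lt hm h).symm
end
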